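/- Let λ > 2. For every g ∈ Γ_λ with tr g > 2 there exists h ∈ Γ_λ such that the conjugate g' := h g h⁻¹ = !![a, b; c, d] satisfies c ≠ 0 and, writing x₊ = (a − d + √((a+d)² − 4))/(2c) for the attracting and x₋ = (a − d − √((a+d)² − 4))/(2c) for the repelling fixed point of g', either x₋ < −1 < x₊, or x₊ < 1 < x₋. (Geometrically: every periodic geodesic of the Hecke triangle surface has a lift to the upper half-plane crossing the vertical line Re z = −1 rightward or the vertical line Re z = 1 leftward; this is the statement that the set Ĉ_R is a cross section for the geodesic flow in the relaxed sense that every periodic geodesic intersects it.) -/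

import Mathlib

/-!
Up to sign and `Γ_λ`-conjugacy, every element of `Γ_λ` is `S`, a power of `T`, or a word
`W = S T^{n₁} ⋯ S T^{nₖ}` with all `nᵢ ≠ 0`: a zero exponent is rotated cyclically next to
another factor and removed by `S² = -1`, shortening the word by two.

For `|μ| ≥ 2` the matrix `S T^n = !![0, 1; -1, -μ]` (`μ = nλ`) maps steep vectors (`|x| < |y|`)
to steep vectors, acting on columns as well as on rows. Hence for `λ > 2` the word `W` maps
`∞, 1, -1` into `(-1, 1)`, its bottom row `(c, d)` satisfies `|c| < |d|`, and `c d` has the sign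
of `nₖ`. Together with `tr W > 2` this forces `d > 0` and `c` of the sign of `nₖ`, and then the
fixed-point polynomial `c x² + (d - a) x - b` is negative at `-1` (when `c > 0`) or positive at
`1` (when `c < 0`): the fixed points lie on either side of `-1`, resp. `1`.
-/

open scoped MatrixGroups
open Matrix

lemma Matrix.SpecialLinearGroup.trace_coe_conj {n R : Type*} [Fintype n] [DecidableEq n]
    [CommRing R] (h g : SpecialLinearGroup n R) :
    trace ((h * g * h⁻¹ : SpecialLinearGroup n R) : Matrix n n R) = trace (g : Matrix n n R) := by
  rw [coe_mul, coe_mul, trace_mul_cycle, coe_inv, adjugate_mul, det_coe, one_smul, one_mul]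

lemma List.exists_rotation_eq_cons_cons_of_mem {α : Type*} {a : α} {l : List α} (ha : a ∈ l)
    (hl : 2 ≤ l.length) : ∃ l₁ l₂ b r, l = l₁ ++ l₂ ∧ l₂ ++ l₁ = b :: a :: r := by
  obtain ⟨s, t, rfl⟩ := List.append_of_mem ha
  rcases s.eq_nil_or_concat' with rfl | ⟨s, b, rfl⟩
  · rcases t.eq_nil_or_concat' with rfl | ⟨t, b, rfl⟩
    · simp at hl
    · exact ⟨a :: t, [b], b, t, by simp, rfl⟩
  · exact ⟨s, b :: a :: t, b, t ++ s, by simp, by simp⟩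

namespace HeckeGroup

section Words

variable {G : Type*} [Group G] (S T : G)

/-- The head of the list is the rightmost factor: `heckeWord S T [n₁, …, nₖ] = S T^nₖ ⋯ S T^n₁`. -/
def heckeWord : List ℤ → G
  | [] => 1
  | n :: l => heckeWord l * (S * T ^ n)

@[simp] lemma heckeWord_nil : heckeWord S T [] = 1 := rfl

@[simp] lemma heckeWord_cons (n : ℤ) (l : List ℤ) :
    heckeWord S T (n :: l) = heckeWord S T l * (S * T ^ n) := rfl

lemma heckeWord_append (l₁ l₂ : List ℤ) :
    heckeWord S T (l₁ ++ l₂) = heckeWord S T l₂ * heckeWord S T l₁ := by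
  induction l₁ with
  | nil => simp
  | cons n l ih => simp [ih, mul_assoc]

lemma heckeWord_cons_mul_zpow (n m : ℤ) (l : List ℤ) :
    heckeWord S T (n :: l) * T ^ m = heckeWord S T ((n + m) :: l) := by
  simp [mul_assoc, _root_.zpow_add]

lemma heckeWord_mem {Γ : Subgroup G} (hS : S ∈ Γ) (hT : T ∈ Γ) (l : List ℤ) :
    heckeWord S T l ∈ Γ := by
  induction l with
  | nil => exact Γ.one_mem
  | cons n l ih => exact Γ.mul_mem ih (Γ.mul_mem hS (Γ.zpow_mem hT n))

variable [HasDistribNeg G]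

lemma heckeWord_cons_zero_cons (hS2 : S * S = -1) (n : ℤ) (l : List ℤ) :
    heckeWord S T (n :: 0 :: l) = -(heckeWord S T l * T ^ n) := by
  simp [mul_assoc, ← mul_assoc S S, hS2]

lemma exists_eq_zpow_mul_heckeWord (hS2 : S * S = -1) {g : G}
    (hg : g ∈ Subgroup.closure {S, T}) :
    ∃ (m : ℤ) (l : List ℤ), g = T ^ m * heckeWord S T l ∨ g = -(T ^ m * heckeWord S T l) := by
  have mul_S (m : ℤ) (l : List ℤ) :
      T ^ m * heckeWord S T l * S = T ^ m * heckeWord S T (0 :: l) := by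
    simp [mul_assoc]
  have mul_zpow (m j : ℤ) (l : List ℤ) : ∃ (m' : ℤ) (l' : List ℤ),
      T ^ m * heckeWord S T l * T ^ j = T ^ m' * heckeWord S T l' := by
    rcases l with _ | ⟨n, l⟩
    · exact ⟨m + j, [], by simp [_root_.zpow_add]⟩
    · exact ⟨m, (n + j) :: l, by rw [mul_assoc, heckeWord_cons_mul_zpow]⟩
  have hSinv : S⁻¹ = -S := inv_eq_of_mul_eq_one_right (by rw [mul_neg, hS2, neg_neg])
  induction hg using Subgroup.closure_induction_right with
  | one => exact ⟨0, [], Or.inl (by simp)⟩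
  | mul_right x _ y hy ih =>
    obtain ⟨m, l, rfl | rfl⟩ := ih <;> rcases hy with hy | hy <;> subst y
    · exact ⟨m, 0 :: l, Or.inl (mul_S m l)⟩
    · obtain ⟨m', l', h⟩ := mul_zpow m 1 l
      exact ⟨m', l', Or.inl (by simpa using h)⟩
    · exact ⟨m, 0 :: l, Or.inr (by rw [neg_mul, mul_S])⟩
    · obtain ⟨m', l', h⟩ := mul_zpow m 1 l
      exact ⟨m', l', Or.inr (by rw [neg_mul]; simpa using h)⟩
  | mul_inv_cancel x _ y hy ih =>
    obtain ⟨m, l, rfl | rfl⟩ := ih <;> rcases hy with hy | hy <;> subst y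
    · exact ⟨m, 0 :: l, Or.inr (by rw [hSinv, mul_neg, mul_S])⟩
    · obtain ⟨m', l', h⟩ := mul_zpow m (-1) l
      exact ⟨m', l', Or.inl (by simpa using h)⟩
    · exact ⟨m, 0 :: l, Or.inl (by rw [hSinv, mul_neg, neg_mul, neg_neg, mul_S])⟩
    · obtain ⟨m', l', h⟩ := mul_zpow m (-1) l
      exact ⟨m', l', Or.inr (by rw [neg_mul]; simpa using h)⟩

end Words

section SignedConj

variable {G : Type*} [Group G] [HasDistribNeg G] (Γ : Subgroup G)

def SignedConj (g g' : G) : Prop :=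
  ∃ h ∈ Γ, h * g * h⁻¹ = g' ∨ h * g * h⁻¹ = -g'

variable {Γ}

lemma SignedConj.refl (g : G) : SignedConj Γ g g := ⟨1, Γ.one_mem, Or.inl (by simp)⟩

lemma SignedConj.of_eq_neg {g g' : G} (h : g = -g') : SignedConj Γ g g' :=
  ⟨1, Γ.one_mem, Or.inr (by simp [h])⟩

lemma SignedConj.conj {h : G} (hh : h ∈ Γ) (g : G) : SignedConj Γ g (h * g * h⁻¹) :=
  ⟨h, hh, Or.inl rfl⟩

lemma SignedConj.trans {g₁ g₂ g₃ : G} (h₁₂ : SignedConj Γ g₁ g₂) (h₂₃ : SignedConj Γ g₂ g₃) :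
    SignedConj Γ g₁ g₃ := by
  obtain ⟨h₁, hh₁, e₁⟩ := h₁₂
  obtain ⟨h₂, hh₂, e₂⟩ := h₂₃
  refine ⟨h₂ * h₁, Γ.mul_mem hh₂ hh₁, ?_⟩
  have e : h₂ * h₁ * g₁ * (h₂ * h₁)⁻¹ = h₂ * (h₁ * g₁ * h₁⁻¹) * h₂⁻¹ := by group
  rw [e]
  rcases e₁ with e₁ | e₁ <;> rcases e₂ with e₂ | e₂ <;>
    simp only [e₁, mul_neg, neg_mul, e₂, neg_neg, true_or, or_true]

end SignedConj

lemma SignedConj.abs_trace_eq {R : Type*} [CommRing R] [LinearOrder R] {Γ : Subgroup SL(2, R)}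
    {g g' : SL(2, R)} (h : SignedConj Γ g g') :
    |trace (g : Matrix (Fin 2) (Fin 2) R)| = |trace (g' : Matrix (Fin 2) (Fin 2) R)| := by
  obtain ⟨h, -, e | e⟩ := h <;>
    rw [← Matrix.SpecialLinearGroup.trace_coe_conj h g, e]
  simp

section Reduction

variable {G : Type*} [Group G] [HasDistribNeg G] (S T : G)

def IsHeckeRep (x : G) : Prop :=
  x = S ∨ (∃ n : ℤ, x = T ^ n) ∨ ∃ l, l ≠ [] ∧ 0 ∉ l ∧ x = heckeWord S T l

variable {S T} {Γ : Subgroup G}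

lemma signedConj_heckeWord_append_comm (hS : S ∈ Γ) (hT : T ∈ Γ) (l₁ l₂ : List ℤ) :
    SignedConj Γ (heckeWord S T (l₁ ++ l₂)) (heckeWord S T (l₂ ++ l₁)) := by
  refine ⟨(heckeWord S T l₂)⁻¹, Γ.inv_mem (heckeWord_mem S T hS hT l₂), Or.inl ?_⟩
  simp [heckeWord_append]

lemma exists_isHeckeRep_signedConj_heckeWord (hS2 : S * S = -1) (hS : S ∈ Γ) (hT : T ∈ Γ)
    (l : List ℤ) : ∃ x, IsHeckeRep S T x ∧ SignedConj Γ (heckeWord S T l) x := by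
  induction hlen : l.length using Nat.strong_induction_on generalizing l with
  | _ len ih =>
    by_cases h0 : 0 ∈ l
    · obtain hl | hl := lt_or_ge l.length 2
      · have hl1 : l.length = 1 := by have := List.length_pos_of_mem h0; omega
        obtain ⟨a, rfl⟩ := List.length_eq_one_iff.mp hl1
        obtain rfl : a = 0 := (List.mem_singleton.mp h0).symm
        exact ⟨S, Or.inl rfl, by simpa using SignedConj.refl S⟩
      obtain ⟨l₁, l₂, n, r, rfl, hrot⟩ := List.exists_rotation_eq_cons_cons_of_mem h0 hl
      have hc := signedConj_heckeWord_append_comm hS hT l₁ l₂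
      rw [hrot, heckeWord_cons_zero_cons S T hS2] at hc
      rcases r with _ | ⟨k, r⟩
      · exact ⟨T ^ n, Or.inr (Or.inl ⟨n, rfl⟩), hc.trans (SignedConj.of_eq_neg (by simp))⟩
      · rw [heckeWord_cons_mul_zpow] at hc
        have hshort : ((k + n) :: r).length < len := by
          have := congrArg List.length hrot
          simp only [List.length_append, List.length_cons] at this hlen ⊢
          omega
        obtain ⟨x, hx, hcx⟩ := ih _ hshort _ rfl
        exact ⟨x, hx, (hc.trans (SignedConj.of_eq_neg rfl)).trans hcx⟩
    · rcases l with _ | ⟨n, l⟩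
      · exact ⟨T ^ (0 : ℤ), Or.inr (Or.inl ⟨0, rfl⟩), by simpa using SignedConj.refl (1 : G)⟩
      · exact ⟨_, Or.inr (Or.inr ⟨_, List.cons_ne_nil n l, h0, rfl⟩), SignedConj.refl _⟩

lemma exists_isHeckeRep_signedConj (hS2 : S * S = -1) {g : G}
    (hg : g ∈ Subgroup.closure {S, T}) :
    ∃ x, IsHeckeRep S T x ∧ SignedConj (Subgroup.closure {S, T}) g x := by
  have hS : S ∈ Subgroup.closure {S, T} := Subgroup.subset_closure (by simp)
  have hT : T ∈ Subgroup.closure {S, T} := Subgroup.subset_closure (by simp)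
  obtain ⟨m, l, hgw⟩ := exists_eq_zpow_mul_heckeWord S T hS2 hg
  have hgw' : SignedConj (Subgroup.closure {S, T}) g (heckeWord S T l * T ^ m) := by
    have hc := SignedConj.conj (Subgroup.inv_mem _ (Subgroup.zpow_mem _ hT m))
      (T ^ m * heckeWord S T l)
    rw [inv_inv, inv_mul_cancel_left] at hc
    rcases hgw with rfl | rfl
    · exact hc
    · exact (SignedConj.of_eq_neg rfl).trans hc
  rcases l with _ | ⟨n, l⟩
  · exact ⟨T ^ m, Or.inr (Or.inl ⟨m, rfl⟩), by simpa using hgw'⟩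
  · rw [heckeWord_cons_mul_zpow] at hgw'
    obtain ⟨x, hx, hcx⟩ := exists_isHeckeRep_signedConj_heckeWord hS2 hS hT ((n + m) :: l)
    exact ⟨x, hx, hgw'.trans hcx⟩

end Reduction

section Steep

variable {R : Type*} [CommRing R] [LinearOrder R]

/-- Projectively, `v 0 / v 1 ∈ (-1, 1)`. -/
def Steep (v : Fin 2 → R) : Prop := |v 0| < |v 1|

@[simp] lemma steep_neg {v : Fin 2 → R} : Steep (-v) ↔ Steep v := by simp [Steep]

/-- Projectively: `W` maps `∞`, `1`, `-1` into `(-1, 1)`, `W⁻¹ ∞` lies outside `[-1, 1]`, and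
`W 1 0 / W 1 1` has the sign of `μ`. -/
def SteepShape (μ : R) (W : Matrix (Fin 2) (Fin 2) R) : Prop :=
  Steep (W *ᵥ ![1, 0]) ∧ Steep (W *ᵥ ![1, 1]) ∧ Steep (W *ᵥ ![1, -1]) ∧ Steep (![0, 1] ᵥ* W) ∧
    0 < μ * (W 1 0 * W 1 1)

lemma SteepShape.neg {μ : R} {W : Matrix (Fin 2) (Fin 2) R} (h : SteepShape μ W) :
    SteepShape μ (-W) := by
  simpa only [SteepShape, neg_mulVec, vecMul_neg, steep_neg, Matrix.neg_apply, neg_mul_neg] using h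

variable [IsStrictOrderedRing R]

lemma abs_lt_abs_add_mul {x y μ : R} (h : |x| < |y|) (hμ : 2 ≤ |μ|) : |y| < |x + μ * y| := by
  have := abs_add' (μ * y) x
  rw [abs_mul] at this
  nlinarith [abs_nonneg y]

variable (R) in
def steepPreserving : Submonoid (Matrix (Fin 2) (Fin 2) R) where
  carrier := {W | (∀ v, Steep v → Steep (W *ᵥ v)) ∧ ∀ v, Steep v → Steep (v ᵥ* W)}
  mul_mem' {A B} hA hB :=
    ⟨fun v hv => by rw [← mulVec_mulVec]; exact hA.1 _ (hB.1 v hv),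
      fun v hv => by rw [← vecMul_vecMul]; exact hB.2 _ (hA.2 v hv)⟩
  one_mem' := ⟨fun v hv => by simpa using hv, fun v hv => by simpa using hv⟩

lemma mem_steepPreserving {μ : R} (hμ : 2 ≤ |μ|) : !![0, 1; -1, -μ] ∈ steepPreserving R := by
  refine ⟨fun v hv => ?_, fun v hv => ?_⟩ <;> unfold Steep at hv ⊢
  · simp only [mulVec, dotProduct, Fin.isValue, of_apply, cons_val', cons_val_fin_one,
      cons_val_zero, Fin.sum_univ_two, zero_mul, cons_val_one, one_mul, zero_add, neg_mul]
    rw [← neg_add, abs_neg]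
    exact abs_lt_abs_add_mul hv hμ
  · simp only [vecMul, dotProduct, Fin.isValue, of_apply, cons_val', cons_val_zero,
      cons_val_fin_one, Fin.sum_univ_two, mul_zero, cons_val_one, mul_neg, mul_one, zero_add,
      abs_neg]
    rw [← mul_neg, mul_comm]
    exact abs_lt_abs_add_mul hv (by rwa [abs_neg])

lemma mul_mul_lt_sq_mul_sq_of_abs_lt {μ r s : R} (h : |r| < |s|) (hμ : 1 ≤ |μ|) :
    μ * (s * r) < μ ^ 2 * s ^ 2 :=
  calc μ * (s * r) ≤ |μ| * |s| * |r| := by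
        rw [← abs_mul, ← abs_mul, ← mul_assoc]
        exact le_abs_self _
    _ < |μ| * |s| * |s| := by
        have : 0 < |s| := (abs_nonneg r).trans_lt h
        gcongr
    _ ≤ |μ| * |μ| * (|s| * |s|) := by
        rw [mul_assoc]
        exact mul_le_mul_of_nonneg_right (le_mul_of_one_le_left (abs_nonneg μ) hμ)
          (mul_self_nonneg _)
    _ = μ ^ 2 * s ^ 2 := by rw [← sq_abs μ, ← sq_abs s]; ring

lemma steepShape_mul {μ : R} {W : Matrix (Fin 2) (Fin 2) R} (hW : W ∈ steepPreserving R)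
    (hμ : 2 < |μ|) : SteepShape μ (W * !![0, 1; -1, -μ]) := by
  have hM := mem_steepPreserving hμ.le
  have hrow : Steep (![0, 1] ᵥ* W) := hW.2 _ (by simp [Steep])
  have one_lt (ν : R) (hν : 2 < |ν|) : 1 < |-1 + ν| := by
    have := abs_add' ν (-1)
    rw [abs_neg, abs_one] at this
    linarith
  refine ⟨?_, ?_, ?_, by rw [← vecMul_vecMul]; exact hM.2 _ hrow, ?_⟩
  · rw [← mulVec_mulVec]; exact hW.1 _ (by simp [Steep, mulVec, dotProduct])
  · rw [← mulVec_mulVec]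
    exact hW.1 _ (by simpa [Steep, mulVec, dotProduct] using one_lt (-μ) (by rwa [abs_neg]))
  · rw [← mulVec_mulVec]; exact hW.1 _ (by simpa [Steep, mulVec, dotProduct] using one_lt μ hμ)
  · simp only [Steep, vecMul, dotProduct, Fin.isValue, cons_val_zero, cons_val_one,
      cons_val_fin_one, Fin.sum_univ_two, zero_mul, one_mul, zero_add] at hrow
    simp only [Fin.isValue, Matrix.mul_apply, Fin.sum_univ_two, of_apply, cons_val', cons_val_zero,
      cons_val_one, cons_val_fin_one, mul_zero, mul_neg, mul_one, zero_add]
    linear_combination mul_mul_lt_sq_mul_sq_of_abs_lt (μ := μ) hrow (by linarith)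

end Steep

section FixedPoints

variable {a b c d : ℝ}

lemma abs_sub_lt_sqrt_discrim (hdet : a * d - b * c = 1) {t : ℝ}
    (ht : c * (c * t ^ 2 + (d - a) * t - b) < 0) :
    |a - d - 2 * c * t| < Real.sqrt ((a + d) ^ 2 - 4) := by
  rw [← Real.sqrt_sq_eq_abs]
  exact Real.sqrt_lt_sqrt (sq_nonneg _) (by linear_combination 4 * ht - 4 * hdet)

lemma repelling_lt_lt_attracting (hdet : a * d - b * c = 1) (hc : 0 < c) {t : ℝ}
    (ht : c * t ^ 2 + (d - a) * t - b < 0) :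
    (a - d - Real.sqrt ((a + d) ^ 2 - 4)) / (2 * c) < t ∧
      t < (a - d + Real.sqrt ((a + d) ^ 2 - 4)) / (2 * c) := by
  have h := abs_lt.mp (abs_sub_lt_sqrt_discrim hdet (mul_neg_of_pos_of_neg hc ht))
  constructor
  · rw [div_lt_iff₀ (by positivity)]; linarith
  · rw [lt_div_iff₀ (by positivity)]; linarith

lemma attracting_lt_lt_repelling (hdet : a * d - b * c = 1) (hc : c < 0) {t : ℝ}
    (ht : 0 < c * t ^ 2 + (d - a) * t - b) :
    (a - d + Real.sqrt ((a + d) ^ 2 - 4)) / (2 * c) < t ∧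
      t < (a - d - Real.sqrt ((a + d) ^ 2 - 4)) / (2 * c) := by
  have h := abs_lt.mp (abs_sub_lt_sqrt_discrim hdet (mul_neg_of_neg_of_pos hc ht))
  constructor
  · rw [div_lt_iff_of_neg (by linarith)]; linarith
  · rw [lt_div_iff_of_neg (by linarith)]; linarith

lemma fixedPoints_straddle_of_steepShape {μ : ℝ} (h : SteepShape μ !![a, b; c, d])
    (hdet : a * d - b * c = 1) (htr : 2 < a + d) :
    c ≠ 0 ∧
      (((a - d - Real.sqrt ((a + d) ^ 2 - 4)) / (2 * c) < -1 ∧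
          -1 < (a - d + Real.sqrt ((a + d) ^ 2 - 4)) / (2 * c)) ∨
        ((a - d + Real.sqrt ((a + d) ^ 2 - 4)) / (2 * c) < 1 ∧
          1 < (a - d - Real.sqrt ((a + d) ^ 2 - 4)) / (2 * c))) := by
  obtain ⟨hinf, hone, hnegone, hrow, hsign⟩ := h
  simp only [Steep, mulVec, vecMul, dotProduct, Fin.isValue, of_apply, cons_val', cons_val_fin_one,
    cons_val_zero, Fin.sum_univ_two, mul_one, cons_val_one, mul_zero, add_zero, mul_neg, zero_mul,
    one_mul, zero_add] at hinf hone hnegone hrow hsign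
  have hd : 0 < d := by
    by_contra! hd
    rw [abs_of_nonpos hd] at hrow
    linarith [le_abs_self a]
  rcases (left_ne_zero_of_mul hsign.ne').lt_or_gt with hμ | hμ
  · have hc := neg_of_mul_neg_left (neg_of_mul_pos_right hsign hμ.le) hd.le
    rw [abs_of_neg hc, abs_of_pos hd] at hrow
    rw [abs_of_pos (by linarith : 0 < c + d)] at hone
    refine ⟨hc.ne, Or.inr ?_⟩
    simpa using attracting_lt_lt_repelling hdet hc (t := 1) (by linarith [le_abs_self (a + b)])
  · have hc := pos_of_mul_pos_left (pos_of_mul_pos_right hsign hμ.le) hd.le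
    rw [abs_of_pos hc, abs_of_pos hd] at hrow
    rw [← sub_eq_add_neg, ← sub_eq_add_neg, abs_sub_comm c, abs_of_pos (by linarith : 0 < d - c)]
      at hnegone
    refine ⟨hc.ne', Or.inl ?_⟩
    simpa using repelling_lt_lt_attracting hdet hc (t := -1)
      (by linarith [le_abs_self (a - b)])

end FixedPoints

section Matrices

variable {R : Type*} [CommRing R] {S T : SL(2, R)} {x : R}

lemma coe_zpow_of_coe_eq (hT : (T : Matrix (Fin 2) (Fin 2) R) = !![1, x; 0, 1]) (n : ℤ) :
    ((T ^ n : SL(2, R)) : Matrix (Fin 2) (Fin 2) R) = !![1, n * x; 0, 1] := by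
  induction n using Int.induction_on with
  | zero => simp [Matrix.one_fin_two]
  | succ k ih =>
    rw [_root_.zpow_add_one, Matrix.SpecialLinearGroup.coe_mul, ih, hT, mul_fin_two]
    simp [add_mul, add_comm]
  | pred k ih =>
    rw [_root_.zpow_sub_one, Matrix.SpecialLinearGroup.coe_mul, ih,
      Matrix.SpecialLinearGroup.coe_inv, hT, adjugate_fin_two_of, mul_fin_two]
    simp [sub_eq_add_neg, add_mul, add_comm]

lemma mul_self_eq_neg_one_of_coe_eq (hS : (S : Matrix (Fin 2) (Fin 2) R) = !![0, 1; -1, 0]) :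
    S * S = -1 := by
  ext i j
  fin_cases i <;> fin_cases j <;> simp [hS]

lemma coe_heckeWord_cons (hS : (S : Matrix (Fin 2) (Fin 2) R) = !![0, 1; -1, 0])
    (hT : (T : Matrix (Fin 2) (Fin 2) R) = !![1, x; 0, 1]) (n : ℤ) (l : List ℤ) :
    ((heckeWord S T (n :: l) : SL(2, R)) : Matrix (Fin 2) (Fin 2) R) =
      ((heckeWord S T l : SL(2, R)) : Matrix (Fin 2) (Fin 2) R) * !![0, 1; -1, -(n * x)] := by
  rw [heckeWord_cons, Matrix.SpecialLinearGroup.coe_mul, Matrix.SpecialLinearGroup.coe_mul, hS,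
    coe_zpow_of_coe_eq hT, mul_fin_two]
  simp

end Matrices

lemma le_abs_intCast_mul {x : ℝ} {n : ℤ} (hn : n ≠ 0) (hx : 0 ≤ x) : x ≤ |(n : ℝ) * x| := by
  rw [abs_mul, abs_of_nonneg hx]
  exact le_mul_of_one_le_left hx (by exact_mod_cast Int.one_le_abs hn)

section Hecke

variable {lam : ℝ} {S T : SL(2, ℝ)}

lemma coe_heckeWord_mem_steepPreserving (hS : (S : Matrix (Fin 2) (Fin 2) ℝ) = !![0, 1; -1, 0])
    (hT : (T : Matrix (Fin 2) (Fin 2) ℝ) = !![1, lam; 0, 1]) (hlam : 2 ≤ lam) {l : List ℤ}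
    (hl : 0 ∉ l) :
    ((heckeWord S T l : SL(2, ℝ)) : Matrix (Fin 2) (Fin 2) ℝ) ∈ steepPreserving ℝ := by
  induction l with
  | nil => exact (steepPreserving ℝ).one_mem
  | cons n l ih =>
    rw [List.mem_cons, not_or] at hl
    rw [coe_heckeWord_cons hS hT]
    exact (steepPreserving ℝ).mul_mem (ih hl.2)
      (mem_steepPreserving (hlam.trans (le_abs_intCast_mul (Ne.symm hl.1) (by linarith))))

lemma steepShape_coe_heckeWord (hS : (S : Matrix (Fin 2) (Fin 2) ℝ) = !![0, 1; -1, 0])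
    (hT : (T : Matrix (Fin 2) (Fin 2) ℝ) = !![1, lam; 0, 1]) (hlam : 2 < lam) {n : ℤ}
    {l : List ℤ} (hl : 0 ∉ n :: l) :
    SteepShape (n * lam) ((heckeWord S T (n :: l) : SL(2, ℝ)) : Matrix (Fin 2) (Fin 2) ℝ) := by
  rw [List.mem_cons, not_or] at hl
  rw [coe_heckeWord_cons hS hT]
  exact steepShape_mul (coe_heckeWord_mem_steepPreserving hS hT hlam.le hl.2)
    (hlam.trans_le (le_abs_intCast_mul (Ne.symm hl.1) (by linarith)))

end Hecke

end HeckeGroup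

open HeckeGroup

theorem crossSection_R_hits_every_periodic_geodesic
    (lam : ℝ) (hlam : 2 < lam)
    (S T : SL(2, ℝ))
    (hS : (S : Matrix (Fin 2) (Fin 2) ℝ) = !![0, 1; -1, 0])
    (hT : (T : Matrix (Fin 2) (Fin 2) ℝ) = !![1, lam; 0, 1])
    (Γ : Subgroup SL(2, ℝ)) (hΓ : Γ = Subgroup.closure {S, T}) :
    ∀ g ∈ Γ, 2 < Matrix.trace (g : Matrix (Fin 2) (Fin 2) ℝ) →
      ∃ h ∈ Γ, ∃ a b c d : ℝ,
        ((h * g * h⁻¹ : SL(2, ℝ)) : Matrix (Fin 2) (Fin 2) ℝ) = !![a, b; c, d] ∧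
        c ≠ 0 ∧
        (((a - d - Real.sqrt ((a + d) ^ 2 - 4)) / (2 * c) < -1 ∧
            -1 < (a - d + Real.sqrt ((a + d) ^ 2 - 4)) / (2 * c)) ∨
          ((a - d + Real.sqrt ((a + d) ^ 2 - 4)) / (2 * c) < 1 ∧
            1 < (a - d - Real.sqrt ((a + d) ^ 2 - 4)) / (2 * c))) := by
  subst hΓ
  intro g hg htr
  obtain ⟨x, hx, hgx⟩ := exists_isHeckeRep_signedConj (mul_self_eq_neg_one_of_coe_eq hS) hg
  have htrx := hgx.abs_trace_eq
  rw [abs_of_pos (by linarith)] at htrx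
  obtain ⟨h, hh, hM⟩ := hgx
  rcases hx with hx | ⟨n, hx⟩ | ⟨l, hl, hl0, hx⟩ <;> subst x
  · have : |trace (S : Matrix (Fin 2) (Fin 2) ℝ)| = 0 := by simp [hS]
    linarith
  · have : |trace ((T ^ n : SL(2, ℝ)) : Matrix (Fin 2) (Fin 2) ℝ)| = 2 := by
      norm_num [coe_zpow_of_coe_eq hT]
    linarith
  obtain ⟨n, l, rfl⟩ := List.exists_cons_of_ne_nil hl
  set M := ((h * g * h⁻¹ : SL(2, ℝ)) : Matrix (Fin 2) (Fin 2) ℝ) with hMdef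
  have hshape : SteepShape (n * lam) M := by
    have hW := steepShape_coe_heckeWord hS hT hlam hl0
    rcases hM with hM | hM <;> rw [hMdef, hM]
    · exact hW
    · exact hW.neg
  have hdet : M.det = 1 := Matrix.SpecialLinearGroup.det_coe _
  have htrM : 2 < M.trace := by rwa [hMdef, Matrix.SpecialLinearGroup.trace_coe_conj]
  rw [eta_fin_two M] at hshape hdet htrM
  rw [det_fin_two_of] at hdet
  rw [trace_fin_two_of] at htrM
  exact ⟨h, hh, _, _, _, _, eta_fin_two M, fixedPoints_straddle_of_steepShape hshape hdet htrM⟩
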